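/- arXiv:1407.7654 — 3 statements merged into one kernel-verified Lean document; each statement's English description precedes it below -/
import Mathlib

section
/- For a positive integer n, the n-th moment of a Poisson random variable with parameter 1 equals the n-th Bell number, i.e., Σ_{k=0}^∞ k^n e^{-1} / k! = B_n. -/
open scoped Nat ENNReal

/-- The Bell numbers: B_0 = 1 and B_{n+1} = Σ_{k≤n} C(n,k) B_k. -/
def bellNumber : ℕ → ℕ
  | 0 => 1
  | n + 1 => ∑ k ∈ (Finset.range (n + 1)).attach, Nat.choose n k * bellNumber k
decreasing_by exact Finset.mem_range.mp k.2

open ENNReal in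
noncomputable def dobT (n : ℕ) : ℝ≥0∞ := ∑' k : ℕ, (k : ℝ≥0∞) ^ n / (k ! : ℕ)

lemma dobT_zero : dobT 0 = ENNReal.ofReal (Real.exp 1) := by
  have hsum : Summable (fun k : ℕ => (1:ℝ) ^ k / k !) := Real.summable_pow_div_factorial 1
  have h : Real.exp 1 = ∑' k : ℕ, (1:ℝ) ^ k / k ! := by
    rw [Real.exp_eq_exp_ℝ, NormedSpace.exp_eq_tsum_div]
  rw [h, ENNReal.ofReal_tsum_of_nonneg (fun k => by positivity) hsum]
  unfold dobT
  congr 1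
  ext k
  rw [ENNReal.ofReal_div_of_pos (by positivity)]
  simp [ENNReal.ofReal_natCast]

lemma dobT_succ (n : ℕ) :
    dobT (n + 1) = ∑ i ∈ Finset.range (n + 1), (n.choose i : ℝ≥0∞) * dobT i := by
  have h0 : dobT (n+1) = ∑' k : ℕ, ((k:ℝ≥0∞) + 1) ^ n / (k ! : ℕ) := by
    unfold dobT
    rw [tsum_eq_zero_add' ENNReal.summable]
    simp only [Nat.cast_zero, zero_pow (Nat.succ_ne_zero n), ENNReal.zero_div, zero_add]
    apply tsum_congr
    intro k
    have hfac : ((k+1)! : ℝ≥0∞) = ((k:ℝ≥0∞) + 1) * (k ! : ℕ) := by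
      push_cast [Nat.factorial_succ]; ring
    have hk1 : ((k:ℝ≥0∞) + 1) ≠ 0 := by simp
    have hk2 : ((k:ℝ≥0∞) + 1) ≠ ⊤ := by simp
    show (((k+1:ℕ)):ℝ≥0∞) ^ (n+1) / ((k+1)! : ℕ) = _
    push_cast
    rw [hfac, pow_succ, mul_comm (((k:ℝ≥0∞)+1) ^ n) _,
      ENNReal.mul_div_mul_left _ _ hk1 hk2]
  rw [h0]
  have hexp : ∀ k : ℕ, ((k:ℝ≥0∞) + 1) ^ n
      = ∑ i ∈ Finset.range (n+1), (k:ℝ≥0∞) ^ i * (n.choose i : ℝ≥0∞) := by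
    intro k
    simpa using add_pow (k:ℝ≥0∞) 1 n
  simp_rw [hexp, div_eq_mul_inv, Finset.sum_mul]
  rw [Summable.tsum_finsetSum (fun i _ => ENNReal.summable)]
  refine Finset.sum_congr rfl fun i _ => ?_
  unfold dobT
  rw [← ENNReal.tsum_mul_left]
  congr 1
  ext k
  rw [mul_comm ((k:ℝ≥0∞) ^ i) _, mul_assoc, div_eq_mul_inv]

lemma dobT_eq (n : ℕ) : dobT n = (bellNumber n : ℝ≥0∞) * ENNReal.ofReal (Real.exp 1) := by
  induction n using Nat.strong_induction_on with
  | _ n ih =>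
    match n with
    | 0 => simp [dobT_zero, bellNumber]
    | n + 1 =>
      rw [dobT_succ]
      have hb : (bellNumber (n+1) : ℝ≥0∞)
          = ∑ i ∈ Finset.range (n+1), (n.choose i : ℝ≥0∞) * (bellNumber i : ℝ≥0∞) := by
        rw [bellNumber]
        push_cast
        exact Finset.sum_attach (Finset.range (n+1))
          (fun i => (n.choose i : ℝ≥0∞) * (bellNumber i : ℝ≥0∞))
      rw [hb, Finset.sum_mul]
      refine Finset.sum_congr rfl fun i hi => ?_
      rw [ih i (Finset.mem_range.mp hi), mul_assoc]

/-- Dobiński's formula: for a positive integer n, the n-th moment of a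
Poisson(1) random variable equals the n-th Bell number,
Σ_{k=0}^∞ k^n e^{-1} / k! = B_n. -/
theorem dobinski (n : ℕ) (hn : 0 < n) :
    ∑' k : ℕ, (k : ℝ) ^ n * Real.exp (-1) / (k !) = bellNumber n := by
  have hne : ∀ k : ℕ, (k : ℝ≥0∞) ^ n / (k ! : ℕ) ≠ ⊤ := by
    intro k
    exact (ENNReal.div_lt_top (by simp) (by exact_mod_cast k.factorial_ne_zero)).ne
  have hreal : ∑' k : ℕ, (k : ℝ) ^ n / (k !) = (bellNumber n : ℝ) * Real.exp 1 := by
    have h1 : (dobT n).toReal = ∑' k : ℕ, (k : ℝ) ^ n / (k !) := by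
      unfold dobT
      rw [ENNReal.tsum_toReal_eq hne]
      congr 1
      ext k
      rw [ENNReal.toReal_div]
      simp
    have h2 : (dobT n).toReal = (bellNumber n : ℝ) * Real.exp 1 := by
      rw [dobT_eq]
      rw [ENNReal.toReal_mul, ENNReal.toReal_ofReal (Real.exp_pos 1).le]
      simp
    rw [← h1, h2]
  have hrw : ∀ k : ℕ, (k : ℝ) ^ n * Real.exp (-1) / (k !)
      = Real.exp (-1) * ((k : ℝ) ^ n / (k !)) := by
    intro k; ring
  simp_rw [hrw]
  rw [tsum_mul_left, hreal, ← mul_assoc, mul_comm (Real.exp (-1)) _, mul_assoc,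
    ← Real.exp_add]
  norm_num
end

section
/- Consider a finite set of jobs with release dates r'_j and deadlines d'_j constructed as follows from a feasible preemptive schedule: for each job j, [b_j, e_j] ⊆ [r'_j, d'_j] ⊆ [r_j, d_j], where [b_j, e_j] spans the execution pieces of j, r'_j is chosen minimal in [r_j, b_j] such that [r'_j, e_j] contains no other job's full life interval, and d'_j is chosen maximal in [e_j, d_j] such that [r'_j, d'_j] contains no other job's full life interval; additionally no interval [b_j, e_j] contains the full life interval [r_k, d_k] of any other job k. Then the resulting instance (r'_j, d'_j) is agreeable: for all jobs i, j, r'_j < r'_i implies d'_j ≤ d'_i. -/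
/-- The restricted instance (r'_j, d'_j) built from a feasible preemptive
schedule — where [b_j, e_j] ⊆ [r'_j, d'_j] ⊆ [r_j, d_j], r'_j is minimal in
[r_j, b_j] such that [r'_j, d'_j] contains no other job's full life interval,
d'_j is maximal in [e_j, d_j] with the same property, and no [b_j, e_j]
contains another job's full life interval — is agreeable. -/
theorem restricted_instance_agreeable {J : Type*}
    (r d b e r' d' : J → ℝ)
    (hbe : ∀ j, b j ≤ e j)
    (hr' : ∀ j, r j ≤ r' j) (hr'b : ∀ j, r' j ≤ b j)
    (hed' : ∀ j, e j ≤ d' j) (hd' : ∀ j, d' j ≤ d j)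
    (hbe_nocontain : ∀ j k, k ≠ j → ¬ (b j ≤ r k ∧ d k ≤ e j))
    (hnocontain : ∀ j k, k ≠ j → ¬ (r' j ≤ r k ∧ d k ≤ d' j))
    (hrmin : ∀ j x, r j ≤ x → x < r' j → ∃ k, k ≠ j ∧ x ≤ r k ∧ d k ≤ d' j)
    (hdmax : ∀ j x, d' j < x → x ≤ d j → ∃ k, k ≠ j ∧ r' j ≤ r k ∧ d k ≤ x) :
    ∀ i j, r' j < r' i → d' j ≤ d' i := by
  intro i j hrr
  by_contra hdd
  push_neg at hdd
  have hij : i ≠ j := fun h => lt_irrefl _ (h ▸ hrr)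
  rcases lt_or_ge (r i) (r' j) with hri | hri
  · -- r i < r' i via r i < r' j < r' i; use minimality of r' i at x = r' j
    obtain ⟨k, hki, hk1, hk2⟩ := hrmin i (r' j) hri.le hrr
    have hkj : k ≠ j := by
      rintro rfl
      exact absurd (le_trans (hd' k) hk2) (not_le.mpr hdd)
    exact hnocontain j k hkj ⟨hk1, hk2.trans hdd.le⟩
  · rcases le_or_gt (d i) (d' j) with hdi | hdi
    · exact hnocontain j i hij ⟨hri, hdi⟩
    · -- d' i < d' j < d i; use maximality of d' i at x = d' j
      obtain ⟨k, hki, hk1, hk2⟩ := hdmax i (d' j) hdd hdi.le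
      have hkj : k ≠ j := by
        rintro rfl
        exact absurd (le_trans hk1 (hr' k)) (not_le.mpr hrr)
      exact hnocontain j k hkj ⟨le_trans hrr.le hk1, hk2⟩
end

section
/- For an agreeable instance in which each job j has processing time p_j, release date r_j, and deadline d_j, if there exists a feasible preemptive single-processor schedule (each job executed for total time p_j within [r_j, d_j], with at most one job running at any time), then the Earliest Deadline First policy produces a feasible non-preemptive single-processor schedule: each job runs in one contiguous block of length p_j within its life interval. -/
open MeasureTheory

/-- The EDF start times for jobs sorted by release date. -/
noncomputable def edfStart (rQ pQ : ℕ → ℝ) : ℕ → ℝ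
  | 0 => rQ 0
  | (k+1) => max (rQ (k+1)) (edfStart rQ pQ k + pQ k)

lemma edfStart_ge (rQ pQ : ℕ → ℝ) (k : ℕ) : rQ k ≤ edfStart rQ pQ k := by
  cases k with
  | zero => exact le_refl _
  | succ k => exact le_max_left _ _

lemma edfStart_chain (rQ pQ : ℕ → ℝ) (hpQ : ∀ m, 0 ≤ pQ m) {i j : ℕ} (h : i < j) :
    edfStart rQ pQ i + pQ i ≤ edfStart rQ pQ j := by
  induction j with
  | zero => omega
  | succ j ih =>
    rcases Nat.lt_succ_iff_lt_or_eq.mp h with h' | rfl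
    · exact le_trans (le_trans (ih h') (le_add_of_nonneg_right (hpQ j)))
        (le_max_right _ _)
    · exact le_max_right _ _

lemma edfStart_block (rQ pQ : ℕ → ℝ) (k : ℕ) :
    ∃ i ≤ k, edfStart rQ pQ i = rQ i ∧
      edfStart rQ pQ k + pQ k = rQ i + ∑ m ∈ Finset.Icc i k, pQ m := by
  induction k with
  | zero => exact ⟨0, le_refl _, rfl, by simp [edfStart]⟩
  | succ k ih =>
    have hdef : edfStart rQ pQ (k+1) = max (rQ (k+1)) (edfStart rQ pQ k + pQ k) := rfl
    rcases max_cases (rQ (k+1)) (edfStart rQ pQ k + pQ k) with ⟨heq, _⟩ | ⟨heq, _⟩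
    · refine ⟨k+1, le_refl _, hdef.trans heq, ?_⟩
      rw [hdef.trans heq, Finset.Icc_self, Finset.sum_singleton]
    · obtain ⟨i, hik, hsi, hsum⟩ := ih
      refine ⟨i, by omega, hsi, ?_⟩
      rw [hdef.trans heq, Finset.sum_Icc_succ_top (by omega : i ≤ k+1), ← add_assoc,
        ← hsum]

/-- For an agreeable instance, if a feasible preemptive single-processor
schedule exists (each job j is executed on a measurable set of total measure
p_j inside its life interval [r_j, d_j], and the execution sets are pairwise
disjoint), then EDF yields a feasible non-preemptive schedule: there are start
times σ_j with each job running in one contiguous block of length p_j inside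
its life interval, no two blocks overlapping. -/
theorem edf_nonpreemptive_for_agreeable {J : Type*} [Fintype J]
    (r d p : J → ℝ)
    (hp : ∀ j, 0 < p j)
    (hagree : ∀ j j', r j ≤ r j' → d j ≤ d j')
    (hpre : ∃ A : J → Set ℝ,
      (∀ j, MeasurableSet (A j)) ∧
      (∀ j, A j ⊆ Set.Icc (r j) (d j)) ∧
      (∀ j, volume (A j) = ENNReal.ofReal (p j)) ∧
      (∀ i j, i ≠ j → Disjoint (A i) (A j))) :
    ∃ σ : J → ℝ,
      (∀ j, r j ≤ σ j ∧ σ j + p j ≤ d j) ∧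
      (∀ i j, i ≠ j → σ i + p i ≤ σ j ∨ σ j + p j ≤ σ i) := by
  classical
  obtain ⟨A, hAm, hAsub, hAvol, hAdisj⟩ := hpre
  set n := Fintype.card J with hn
  set e := Fintype.equivFin J with he
  set qe : Fin n ≃ J := (Tuple.sort (r ∘ e.symm)).trans e.symm with hqe
  have hqmono : Monotone (r ∘ qe) := Tuple.monotone_sort (r ∘ e.symm)
  -- jobs sorted by release date
  set rQ : ℕ → ℝ := fun m => if h : m < n then r (qe ⟨m, h⟩) else 0 with hrQ
  set pQ : ℕ → ℝ := fun m => if h : m < n then p (qe ⟨m, h⟩) else 0 with hpQdef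
  set dQ : ℕ → ℝ := fun m => if h : m < n then d (qe ⟨m, h⟩) else 0 with hdQ
  have hpQ0 : ∀ m, 0 ≤ pQ m := by
    intro m
    by_cases h : m < n
    · simp only [hpQdef, dif_pos h]; exact (hp _).le
    · simp only [hpQdef, dif_neg h]; exact le_refl _
  have hrQ' : ∀ (m : Fin n), rQ m = r (qe m) := by
    intro m; simp [hrQ, m.isLt]
  have hpQ' : ∀ (m : Fin n), pQ m = p (qe m) := by
    intro m; simp [hpQdef, m.isLt]
  have hdQ' : ∀ (m : Fin n), dQ m = d (qe m) := by
    intro m; simp [hdQ, m.isLt]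
  have hrmono : ∀ a b : ℕ, a ≤ b → b < n → rQ a ≤ rQ b := by
    intro a b hab hb
    have ha : a < n := lt_of_le_of_lt hab hb
    simp only [hrQ, dif_pos ha, dif_pos hb]
    exact hqmono (show (⟨a, ha⟩ : Fin n) ≤ ⟨b, hb⟩ from hab)
  have hdmono : ∀ a b : ℕ, a ≤ b → b < n → dQ a ≤ dQ b := by
    intro a b hab hb
    have ha : a < n := lt_of_le_of_lt hab hb
    simp only [hdQ, dif_pos ha, dif_pos hb]
    exact hagree _ _ (hqmono (show (⟨a, ha⟩ : Fin n) ≤ ⟨b, hb⟩ from hab))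
  -- key feasibility bound from the preemptive schedule
  have key : ∀ i k : ℕ, i ≤ k → k < n →
      rQ i + ∑ m ∈ Finset.Icc i k, pQ m ≤ dQ k := by
    intro i k hik hk
    have hnpos : 0 < n := by omega
    set ψ : ℕ → J := fun m => qe ⟨m % n, Nat.mod_lt _ hnpos⟩ with hψ
    have hψ' : ∀ m (hm : m < n), ψ m = qe ⟨m, hm⟩ := by
      intro m hm
      simp only [hψ]
      congr 1
      exact Fin.ext (Nat.mod_eq_of_lt hm)
    set F : Finset J := (Finset.Icc i k).image ψ with hF
    have hinj : ∀ x ∈ Finset.Icc i k, ∀ y ∈ Finset.Icc i k, ψ x = ψ y → x = y := by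
      intro x hx y hy hxy
      rw [Finset.mem_Icc] at hx hy
      rw [hψ' x (by omega), hψ' y (by omega)] at hxy
      exact congrArg Fin.val (qe.injective hxy)
    have hsum : ∑ m ∈ Finset.Icc i k, pQ m = ∑ j ∈ F, p j := by
      rw [hF, Finset.sum_image hinj]
      refine Finset.sum_congr rfl ?_
      intro m hm
      rw [Finset.mem_Icc] at hm
      have hm' : m < n := by omega
      rw [hψ' m hm']
      simp [hpQdef, hm']
    -- every job in F lives inside [rQ i, dQ k]
    have hsub : ∀ j ∈ F, Set.Icc (r j) (d j) ⊆ Set.Icc (rQ i) (dQ k) := by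
      intro j hj
      rw [hF, Finset.mem_image] at hj
      obtain ⟨m, hm, rfl⟩ := hj
      rw [Finset.mem_Icc] at hm
      have hm' : m < n := by omega
      rw [hψ' m hm']
      apply Set.Icc_subset_Icc
      · have := hrmono i m hm.1 hm'
        simpa [hrQ, hm'] using this
      · have := hdmono m k hm.2 hk
        simpa [hdQ, hm'] using this
    -- the interval [rQ i, dQ k] is nonempty
    have hk' : (⟨k, hk⟩ : Fin n) = ⟨k, hk⟩ := rfl
    have hkne : (A (qe ⟨k, hk⟩)).Nonempty := by
      rw [Set.nonempty_iff_ne_empty]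
      intro hemp
      have := hAvol (qe ⟨k, hk⟩)
      rw [hemp, measure_empty] at this
      have hppos := hp (qe ⟨k, hk⟩)
      rw [eq_comm, ENNReal.ofReal_eq_zero] at this
      linarith
    obtain ⟨x, hx⟩ := hkne
    have hxIcc := hAsub _ hx
    have hIle : rQ i ≤ dQ k := by
      have h1 : rQ i ≤ rQ k := hrmono i k hik hk
      have h2 : rQ k ≤ x := by
        rw [hrQ]; simp only [dif_pos hk]; exact hxIcc.1
      have h3 : x ≤ dQ k := by
        rw [hdQ]; simp only [dif_pos hk]; exact hxIcc.2
      linarith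
    -- measure argument
    have hdisjF : (↑F : Set J).PairwiseDisjoint A := by
      intro a _ b _ hab
      exact hAdisj a b hab
    have hvol : (∑ j ∈ F, ENNReal.ofReal (p j)) = volume (⋃ j ∈ F, A j) := by
      rw [measure_biUnion_finset hdisjF (fun b _ => hAm b)]
      exact Finset.sum_congr rfl (fun j _ => (hAvol j).symm)
    have hUsub : (⋃ j ∈ F, A j) ⊆ Set.Icc (rQ i) (dQ k) := by
      refine Set.iUnion₂_subset ?_
      intro j hj
      exact fun x hx => hsub j hj (hAsub j hx)
    have hle : ENNReal.ofReal (∑ j ∈ F, p j) ≤ ENNReal.ofReal (dQ k - rQ i) := by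
      rw [ENNReal.ofReal_sum_of_nonneg (fun j _ => (hp j).le), hvol,
        ← Real.volume_Icc]
      exact measure_mono hUsub
    have : ∑ j ∈ F, p j ≤ dQ k - rQ i :=
      (ENNReal.ofReal_le_ofReal_iff (by linarith)).mp hle
    rw [hsum]
    linarith
  -- the EDF schedule
  set s : ℕ → ℝ := edfStart rQ pQ with hs
  refine ⟨fun j => s ((qe.symm j : Fin n) : ℕ), ?_, ?_⟩
  · intro j
    set k : Fin n := qe.symm j with hkdef
    have hj : qe k = j := qe.apply_symm_apply j
    constructor
    · have := edfStart_ge rQ pQ (k : ℕ)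
      rw [hrQ' k, hj] at this
      exact this
    · obtain ⟨i, hik, _, hsum⟩ := edfStart_block rQ pQ (k : ℕ)
      have hkey := key i (k : ℕ) hik k.isLt
      have hd : dQ (k : ℕ) = d j := by rw [hdQ' k, hj]
      have hpk : pQ (k : ℕ) = p j := by rw [hpQ' k, hj]
      rw [← hpk, hs, hsum, ← hd]
      exact hkey
  · intro a b hab
    set ka : Fin n := qe.symm a with hka
    set kb : Fin n := qe.symm b with hkb
    have hane : ka ≠ kb := fun h => hab (by rw [← qe.apply_symm_apply a, ← qe.apply_symm_apply b, ← hka, ← hkb, h])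
    have hpa : pQ (ka : ℕ) = p a := by rw [hpQ' ka, hka, qe.apply_symm_apply]
    have hpb : pQ (kb : ℕ) = p b := by rw [hpQ' kb, hkb, qe.apply_symm_apply]
    rcases lt_or_gt_of_ne (fun h : (ka : ℕ) = (kb : ℕ) => hane (Fin.ext h)) with h | h
    · left
      rw [← hpa]
      exact edfStart_chain rQ pQ hpQ0 h
    · right
      rw [← hpb]
      exact edfStart_chain rQ pQ hpQ0 h
end
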